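/- (Moyal formula for matrix elements) Let a ∈ S(ℝ²ⁿ) and let be its Weyl quantization, Â = (1/(πħ))ⁿ ∬ a(x,p) T̂_GR(x,p) dⁿp dⁿx (weakly interpreted). Then for Ψ, Φ ∈ S(ℝⁿ): ⟨Φ|ÂΨ⟩ = ∬ a(x,p) W_{Ψ,Φ}(x,p) dⁿp dⁿx. -/

import Mathlib

open MeasureTheory Complex

/-- The cross-Wigner distribution of two functions on ℝⁿ. -/
noncomputable def crossWigner (hbar : ℝ) (n : ℕ) (Ψ Φ : (Fin n → ℝ) → ℂ)
    (x p : Fin n → ℝ) : ℂ :=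
  (1 / (2 * Real.pi * hbar)) ^ n *
    ∫ y : Fin n → ℝ,
      Complex.exp (-(Complex.I * ((∑ i, p i * y i : ℝ) : ℂ) / (hbar : ℂ))) *
        Ψ (x + y / 2) * (starRingEnd ℂ) (Φ (x - y / 2))

/-- The Grossmann–Royer operator at `(x₀,p₀)`:
`(T̂_GR(x₀,p₀)f)(u) = e^{(2i/hbar) p₀·(u − x₀)} f(2x₀ − u)`. -/
noncomputable def grossmannRoyer (hbar : ℝ) (n : ℕ) (x₀ p₀ : Fin n → ℝ)
    (f : (Fin n → ℝ) → ℂ) : (Fin n → ℝ) → ℂ :=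
  fun u =>
    Complex.exp (2 * Complex.I * ((∑ i, p₀ i * (u i - x₀ i) : ℝ) : ℂ) / (hbar : ℂ)) *
      f (2 • x₀ - u)

/-- The Weyl quantization of a symbol `a ∈ S(ℝ²ⁿ)`, defined weakly through the
Grossmann–Royer operators: `(Âf)(u) = (1/(π hbar))ⁿ ∬ a(x,p) (T̂_GR(x,p)f)(u) dⁿp dⁿx`. -/
noncomputable def weylQuant (hbar : ℝ) (n : ℕ)
    (a : (Fin n → ℝ) × (Fin n → ℝ) → ℂ) (f : (Fin n → ℝ) → ℂ) :
    (Fin n → ℝ) → ℂ :=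
  fun u =>
    (1 / (Real.pi * hbar)) ^ n *
      ∫ x : Fin n → ℝ, ∫ p : Fin n → ℝ, a (x, p) * grossmannRoyer hbar n x p f u

/-!
`⟨Φ|ÂΨ⟩` is a triple integral over `(u, x, p)` that converges absolutely: `T̂_GR(x,p)` is a
reflection times a unimodular phase, so the integrand is bounded by `|Φ(u)| |a(x,p)| sup |Ψ|`.
Fubini moves the `u`-integral inside, and there the substitution `y = 2 (x - u)` turns
`(πħ)⁻ⁿ ∫ Φ* · T̂_GR(x,p) Ψ` into the cross-Wigner distribution `W_{Ψ,Φ}(x,p)`.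
-/

section

variable {hbar : ℝ} {n : ℕ}

theorem norm_grossmannRoyer (x p : Fin n → ℝ) (f : (Fin n → ℝ) → ℂ) (u : Fin n → ℝ) :
    ‖grossmannRoyer hbar n x p f u‖ = ‖f (2 • x - u)‖ := by
  have hphase : 2 * I * ((∑ i, p i * (u i - x i) : ℝ) : ℂ) / hbar =
      ((2 * (∑ i, p i * (u i - x i)) / hbar : ℝ) : ℂ) * I := by
    push_cast; ring
  rw [grossmannRoyer, norm_mul, hphase, norm_exp_ofReal_mul_I, one_mul]

theorem Continuous.grossmannRoyer {X : Type*} [TopologicalSpace X] {f : (Fin n → ℝ) → ℂ}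
    (hf : Continuous f) {x p u : X → Fin n → ℝ} (hx : Continuous x) (hp : Continuous p)
    (hu : Continuous u) : Continuous fun t => grossmannRoyer hbar n (x t) (p t) f (u t) := by
  unfold _root_.grossmannRoyer
  fun_prop

/- Substitute `y = 2 (x - u)`: the Jacobian `2ⁿ` turns `(πħ)⁻ⁿ` into `(2πħ)⁻ⁿ`. -/
theorem crossWigner_eq_integral_conj_mul_grossmannRoyer (Ψ Φ : (Fin n → ℝ) → ℂ)
    (x p : Fin n → ℝ) :
    crossWigner hbar n Ψ Φ x p = (1 / ((Real.pi : ℂ) * hbar)) ^ n *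
      ∫ u, (starRingEnd ℂ) (Φ u) * grossmannRoyer hbar n x p Ψ u := by
  set g : (Fin n → ℝ) → ℂ := fun y =>
    exp (-(I * ((∑ i, p i * y i : ℝ) : ℂ) / hbar)) *
      Ψ (x + y / 2) * (starRingEnd ℂ) (Φ (x - y / 2)) with hg
  have hsubst : ∀ u, (starRingEnd ℂ) (Φ u) * grossmannRoyer hbar n x p Ψ u =
      g ((2 : ℝ) • (x - u)) := by
    intro u
    have hplus : x + (2 : ℝ) • (x - u) / 2 = 2 • x - u := by
      ext i; simp only [Pi.add_apply, Pi.div_apply, Pi.smul_apply, Pi.sub_apply, smul_eq_mul,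
        Pi.ofNat_apply]; ring
    have hminus : x - (2 : ℝ) • (x - u) / 2 = u := by
      ext i; simp only [Pi.sub_apply, Pi.div_apply, Pi.smul_apply, smul_eq_mul,
        Pi.ofNat_apply]; ring
    have hdot : (∑ i, p i * ((2 : ℝ) • (x - u)) i) = -2 * ∑ i, p i * (u i - x i) := by
      rw [Finset.mul_sum]
      refine Finset.sum_congr rfl fun i _ => ?_
      simp only [Pi.smul_apply, Pi.sub_apply, smul_eq_mul]; ring
    simp only [hg, grossmannRoyer, hplus, hminus, hdot]
    push_cast
    ring_nf
  have hint : ∫ u, (starRingEnd ℂ) (Φ u) * grossmannRoyer hbar n x p Ψ u =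
      ((2 : ℂ) ^ n)⁻¹ * ∫ y, g y := by
    calc ∫ u, (starRingEnd ℂ) (Φ u) * grossmannRoyer hbar n x p Ψ u
        = ∫ u, g ((2 : ℝ) • (x - u)) := by simp only [hsubst]
      _ = ∫ v, g ((2 : ℝ) • v) := integral_sub_left_eq_self (fun v => g ((2 : ℝ) • v)) _ x
      _ = |((2 : ℝ) ^ Module.finrank ℝ (Fin n → ℝ))⁻¹| • ∫ y, g y :=
          Measure.integral_comp_smul volume g 2
      _ = ((2 : ℂ) ^ n)⁻¹ * ∫ y, g y := by
          rw [Module.finrank_fin_fun, abs_of_pos (by positivity), Complex.real_smul]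
          push_cast; rfl
  rw [hint, crossWigner, ← hg, ← mul_assoc, ← inv_pow, ← mul_pow]
  congr 2
  ring

theorem integrable_conj_mul_symbol_mul_grossmannRoyer
    {a : (Fin n → ℝ) × (Fin n → ℝ) → ℂ} {Ψ Φ : (Fin n → ℝ) → ℂ} {C : ℝ}
    (ha : Integrable a) (hΨ : Continuous Ψ) (hΨC : ∀ v, ‖Ψ v‖ ≤ C) (hΦ : Integrable Φ) :
    Integrable (fun q : (Fin n → ℝ) × (Fin n → ℝ) × (Fin n → ℝ) =>
      (starRingEnd ℂ) (Φ q.1) * (a q.2 * grossmannRoyer hbar n q.2.1 q.2.2 Ψ q.1)) := by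
  refine Integrable.mono' (hΦ.norm.mul_prod (ha.norm.mul_const C)) ?_ ?_
  · exact (continuous_conj.comp_aestronglyMeasurable hΦ.aestronglyMeasurable).comp_fst.mul
      (ha.aestronglyMeasurable.comp_snd.mul
        (hΨ.grossmannRoyer continuous_snd.fst continuous_snd.snd continuous_fst).aestronglyMeasurable)
  · refine Filter.Eventually.of_forall fun q => ?_
    simp only [norm_mul, RCLike.norm_conj, norm_grossmannRoyer]
    gcongr
    exact hΨC _

theorem weylQuant_eq_integral_prod {a : (Fin n → ℝ) × (Fin n → ℝ) → ℂ} {Ψ : (Fin n → ℝ) → ℂ}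
    {C : ℝ} (ha : Integrable a) (hΨ : Continuous Ψ) (hΨC : ∀ v, ‖Ψ v‖ ≤ C) (u : Fin n → ℝ) :
    weylQuant hbar n a Ψ u = (1 / ((Real.pi : ℂ) * hbar)) ^ n *
      ∫ z : (Fin n → ℝ) × (Fin n → ℝ), a z * grossmannRoyer hbar n z.1 z.2 Ψ u := by
  have hT : Continuous fun z : (Fin n → ℝ) × (Fin n → ℝ) => grossmannRoyer hbar n z.1 z.2 Ψ u :=
    hΨ.grossmannRoyer continuous_fst continuous_snd continuous_const
  have hint : Integrable fun z : (Fin n → ℝ) × (Fin n → ℝ) =>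
      a z * grossmannRoyer hbar n z.1 z.2 Ψ u :=
    ha.mul_bdd hT.aestronglyMeasurable
      (Filter.Eventually.of_forall fun z => (norm_grossmannRoyer ..).trans_le (hΨC _))
  rw [weylQuant, Measure.volume_eq_prod, integral_prod _ hint]

end

theorem moyal_matrix_elements_general (hbar : ℝ) (n : ℕ)
    (a : SchwartzMap ((Fin n → ℝ) × (Fin n → ℝ)) ℂ)
    (Ψ Φ : SchwartzMap (Fin n → ℝ) ℂ) :
    (∫ u : Fin n → ℝ, (starRingEnd ℂ) (Φ u) * weylQuant hbar n (⇑a) (⇑Ψ) u) =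
      ∫ x : Fin n → ℝ, ∫ p : Fin n → ℝ, a (x, p) * crossWigner hbar n Ψ Φ x p := by
  have hΨC := SchwartzMap.norm_le_seminorm ℝ Ψ
  -- instance search does not find this product instance by itself
  have : (volume : Measure ((Fin n → ℝ) × (Fin n → ℝ))).IsAddHaarMeasure :=
    Measure.prod.instIsAddHaarMeasure _ _
  have ha : Integrable a := a.integrable
  set c : ℂ := (1 / ((Real.pi : ℂ) * hbar)) ^ n
  have hF := (integrable_conj_mul_symbol_mul_grossmannRoyer (hbar := hbar) ha
    Ψ.continuous hΨC Φ.integrable).const_mul c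
  have hW : ∀ z : (Fin n → ℝ) × (Fin n → ℝ), a z * crossWigner hbar n Ψ Φ z.1 z.2 =
      ∫ u, c * ((starRingEnd ℂ) (Φ u) * (a z * grossmannRoyer hbar n z.1 z.2 Ψ u)) := by
    intro z
    simp only [crossWigner_eq_integral_conj_mul_grossmannRoyer, ← integral_const_mul]
    congr 1 with u
    ring
  calc (∫ u, (starRingEnd ℂ) (Φ u) * weylQuant hbar n a Ψ u)
      = ∫ u, ∫ z, c * ((starRingEnd ℂ) (Φ u) * (a z * grossmannRoyer hbar n z.1 z.2 Ψ u)) := by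
        congr 1 with u
        rw [weylQuant_eq_integral_prod ha Ψ.continuous hΨC, integral_const_mul,
          integral_const_mul]
        ring
    _ = ∫ z, ∫ u, c * ((starRingEnd ℂ) (Φ u) * (a z * grossmannRoyer hbar n z.1 z.2 Ψ u)) :=
        integral_integral_swap hF
    _ = ∫ z, a z * crossWigner hbar n Ψ Φ z.1 z.2 := by simp only [hW]
    _ = ∫ x, ∫ p, a (x, p) * crossWigner hbar n Ψ Φ x p := by
        rw [Measure.volume_eq_prod, integral_prod]
        exact hF.swap.integral_prod_left.congr (ae_of_all _ fun z => (hW z).symm)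

/-- Moyal formula for matrix elements: for a Schwartz symbol `a` with
Weyl quantization `Â` and Schwartz functions Ψ, Φ:
`⟨Φ|ÂΨ⟩ = ∬ a(x,p) W_{Ψ,Φ}(x,p) dⁿp dⁿx`. -/
theorem moyal_matrix_elements (hbar : ℝ) (hh : 0 < hbar) (n : ℕ)
    (a : SchwartzMap ((Fin n → ℝ) × (Fin n → ℝ)) ℂ)
    (Ψ Φ : SchwartzMap (Fin n → ℝ) ℂ) :
    (∫ u : Fin n → ℝ, (starRingEnd ℂ) (Φ u) * weylQuant hbar n (⇑a) (⇑Ψ) u) =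
      ∫ x : Fin n → ℝ, ∫ p : Fin n → ℝ, a (x, p) * crossWigner hbar n Ψ Φ x p :=
  moyal_matrix_elements_general hbar n a Ψ Φ
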